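/- arXiv:2008.08641 — 2 statements merged into one kernel-verified Lean document; each statement's English description precedes it below -/
import Mathlib

section
/- Let n ∈ ℕ and α, β > −1 be real, let Ỹ(x) = (1−x)^((α+1)/2)·(1+x)^((β+1)/2)·P_n^{(α,β)}(x) on (−1,1), and set Q(x) = 4(1−x²)² and R(x) = (L²−1)(1−x²) − 2(α²−1)(1+x) − 2(β²−1)(1−x), where L = 2n+α+β+1. Then Ỹ is infinitely differentiable on (−1,1), and for each x ∈ (−1,1) the scaled derivatives a_j = Ỹ^{(j)}(x)/j! (with the convention a_{−1} = a_{−2} = 0) satisfy, for all j ≥ 0: (j+2)(j+1)Q(x)·a_{j+2} + (j+1)j·Q'(x)·a_{j+1} + (j(j−1)Q''(x)/2 + R(x))·a_j + ((j−1)(j−2)Q'''(x)/6 + R'(x))·a_{j−1} + (1/2)·((j−2)(j−3)Q''''(x)/12 + R''(x))·a_{j−2} = 0. -/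
open Real Filter Set

/-- Generalized binomial coefficient `C(t, k) = t(t-1)⋯(t-k+1)/k!`. -/
noncomputable def genBinom (t : ℝ) (k : ℕ) : ℝ :=
  (∏ i ∈ Finset.range k, (t - i)) / (Nat.factorial k)

/-- The Jacobi polynomial `P_n^{(α,β)}(x)`. -/
noncomputable def jacobiP (n : ℕ) (α β : ℝ) (x : ℝ) : ℝ :=
  ∑ m ∈ Finset.range (n + 1),
    genBinom (n + α) m * genBinom (n + β) (n - m) * ((x - 1) / 2) ^ (n - m) * ((x + 1) / 2) ^ m

noncomputable def jc (n : ℕ) (α β : ℝ) (m : ℕ) : ℝ :=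
  genBinom (n + α) m * genBinom (n + β) (n - m)

noncomputable def jacobiP1 (n : ℕ) (α β : ℝ) (x : ℝ) : ℝ :=
  ∑ m ∈ Finset.range (n + 1), jc n α β m *
    ((((n - m : ℕ) : ℝ) * ((x - 1) / 2) ^ (n - m - 1) * ((x + 1) / 2) ^ m
      + (m : ℝ) * ((x - 1) / 2) ^ (n - m) * ((x + 1) / 2) ^ (m - 1)) / 2)

noncomputable def jacobiP2 (n : ℕ) (α β : ℝ) (x : ℝ) : ℝ :=
  ∑ m ∈ Finset.range (n + 1), jc n α β m *
    ((((n - m : ℕ) : ℝ) * ((n - m - 1 : ℕ) : ℝ) * ((x - 1) / 2) ^ (n - m - 2) * ((x + 1) / 2) ^ m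
      + 2 * ((n - m : ℕ) : ℝ) * (m : ℝ) * ((x - 1) / 2) ^ (n - m - 1) * ((x + 1) / 2) ^ (m - 1)
      + (m : ℝ) * ((m - 1 : ℕ) : ℝ) * ((x - 1) / 2) ^ (n - m) * ((x + 1) / 2) ^ (m - 2)) / 4)

lemma hasDerivAt_u (x : ℝ) : HasDerivAt (fun x : ℝ => (x - 1) / 2) (1 / 2) x := by
  simpa using ((hasDerivAt_id x).sub_const 1).div_const 2

lemma hasDerivAt_v (x : ℝ) : HasDerivAt (fun x : ℝ => (x + 1) / 2) (1 / 2) x := by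
  simpa using ((hasDerivAt_id x).add_const 1).div_const 2

lemma hasDerivAt_uv (p q : ℕ) (x : ℝ) :
    HasDerivAt (fun x : ℝ => ((x - 1) / 2) ^ p * ((x + 1) / 2) ^ q)
      (((p : ℝ) * ((x - 1) / 2) ^ (p - 1) * ((x + 1) / 2) ^ q
        + (q : ℝ) * ((x - 1) / 2) ^ p * ((x + 1) / 2) ^ (q - 1)) / 2) x := by
  have h := ((hasDerivAt_u x).fun_pow p).fun_mul ((hasDerivAt_v x).fun_pow q)
  refine h.congr_deriv ?_
  ring

lemma jacobiP_hasDerivAt (n : ℕ) (α β : ℝ) (x : ℝ) :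
    HasDerivAt (jacobiP n α β) (jacobiP1 n α β x) x := by
  have : HasDerivAt (fun x => ∑ m ∈ Finset.range (n + 1),
      jc n α β m * (((x - 1) / 2) ^ (n - m) * ((x + 1) / 2) ^ m)) (jacobiP1 n α β x) x := by
    unfold jacobiP1
    exact HasDerivAt.fun_sum fun m _ => (hasDerivAt_uv (n - m) m x).const_mul _
  convert this using 2 with y
  unfold jacobiP jc
  exact Finset.sum_congr rfl fun m _ => by ring

lemma jacobiP1_hasDerivAt (n : ℕ) (α β : ℝ) (x : ℝ) :
    HasDerivAt (jacobiP1 n α β) (jacobiP2 n α β x) x := by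
  unfold jacobiP1 jacobiP2
  apply HasDerivAt.fun_sum
  intro m _
  apply HasDerivAt.const_mul
  have h1 := (hasDerivAt_uv (n - m - 1) m x).const_mul ((n - m : ℕ) : ℝ)
  have h2 := (hasDerivAt_uv (n - m) (m - 1) x).const_mul ((m : ℕ) : ℝ)
  have h := (h1.fun_add h2).div_const 2
  convert h using 1
  · funext y; ring
  · have e1 : n - m - 1 - 1 = n - m - 2 := rfl
    have e2 : m - 1 - 1 = m - 2 := rfl
    rw [e1, e2]; ring

lemma genBinom_succ (t : ℝ) (k : ℕ) :
    genBinom t (k + 1) * (k + 1) = genBinom t k * (t - k) := by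
  unfold genBinom
  rw [Finset.prod_range_succ, Nat.factorial_succ]
  have hk : (Nat.factorial k : ℝ) ≠ 0 := Nat.cast_ne_zero.2 (Nat.factorial_ne_zero k)
  have hk1 : ((k : ℝ) + 1) ≠ 0 := by positivity
  push_cast
  field_simp

lemma jc_rec (n : ℕ) (α β : ℝ) (q : ℕ) (hq : q < n) :
    jc n α β q * (((n - q : ℕ) : ℝ) * (((n - q : ℕ) : ℝ) + α))
      = jc n α β (q + 1) * (((q : ℝ) + 1) * (((q : ℝ) + 1) + β)) := by
  unfold jc
  obtain ⟨m, hm⟩ : ∃ m, n - q = m + 1 := ⟨n - q - 1, by omega⟩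
  have h1 : n - (q + 1) = m := by omega
  have h2 := genBinom_succ (n + α) q
  have h3 := genBinom_succ (n + β) m
  have hmc : (m : ℝ) = (n : ℝ) - q - 1 := by
    have h4 : ((n - q : ℕ) : ℝ) = (n : ℝ) - q := Nat.cast_sub (le_of_lt hq)
    rw [hm] at h4; push_cast at h4; linarith
  rw [hm, h1]
  push_cast
  -- goal: algebra in genBinom values
  have e2 : genBinom (↑n + α) (q + 1) = genBinom (↑n + α) q * (↑n + α - ↑q) / (↑q + 1) := by
    have hq1 : ((q : ℝ) + 1) ≠ 0 := by positivity
    field_simp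
    linarith [h2]
  have e3 : genBinom (↑n + β) (m + 1) = genBinom (↑n + β) m * (↑n + β - ↑m) / (↑m + 1) := by
    have hm1 : ((m : ℝ) + 1) ≠ 0 := by positivity
    field_simp
    linarith [h3]
  rw [e2, e3, hmc]
  have hq1 : ((q : ℝ) + 1) ≠ 0 := by positivity
  have hm1 : (n : ℝ) - q ≠ 0 := by
    have : (q : ℝ) < n := by exact_mod_cast hq
    linarith
  rw [show (n:ℝ) - q - 1 + 1 = n - q by ring]
  field_simp
  ring

lemma term_ode (α β : ℝ) (p q : ℕ) (x : ℝ) :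
    (1 - x ^ 2) * (((p : ℝ) * ((p - 1 : ℕ) : ℝ) * ((x - 1) / 2) ^ (p - 2) * ((x + 1) / 2) ^ q
        + 2 * (p : ℝ) * (q : ℝ) * ((x - 1) / 2) ^ (p - 1) * ((x + 1) / 2) ^ (q - 1)
        + (q : ℝ) * ((q - 1 : ℕ) : ℝ) * ((x - 1) / 2) ^ p * ((x + 1) / 2) ^ (q - 2)) / 4)
      + (β - α - (α + β + 2) * x) *
        (((p : ℝ) * ((x - 1) / 2) ^ (p - 1) * ((x + 1) / 2) ^ q
          + (q : ℝ) * ((x - 1) / 2) ^ p * ((x + 1) / 2) ^ (q - 1)) / 2)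
      + ((p : ℝ) + q) * (((p : ℝ) + q) + α + β + 1) * (((x - 1) / 2) ^ p * ((x + 1) / 2) ^ q)
    = -((p : ℝ) * ((p : ℝ) + α)) * ((x - 1) / 2) ^ (p - 1) * ((x + 1) / 2) ^ (q + 1)
      + ((p : ℝ) * ((p : ℝ) + α) + (q : ℝ) * ((q : ℝ) + β)) * ((x - 1) / 2) ^ p * ((x + 1) / 2) ^ q
      - (q : ℝ) * ((q : ℝ) + β) * ((x - 1) / 2) ^ (p + 1) * ((x + 1) / 2) ^ (q - 1) := by
  rcases p with _ | _ | p <;> rcases q with _ | _ | q <;>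
    · simp only [Nat.add_sub_cancel, Nat.succ_sub_one, Nat.zero_sub, Nat.sub_zero,
        Nat.sub_self, pow_zero, pow_succ]
      push_cast
      ring

noncomputable def sE (n : ℕ) (α β x : ℝ) (m : ℕ) : ℝ :=
  jc n α β m * (((n - m : ℕ) : ℝ) * (((n - m : ℕ) : ℝ) + α)) *
    (((x - 1) / 2) ^ (n - m) * ((x + 1) / 2) ^ m)

noncomputable def sG (n : ℕ) (α β x : ℝ) (m : ℕ) : ℝ :=
  jc n α β m * ((m : ℝ) * ((m : ℝ) + β)) *
    (((x - 1) / 2) ^ (n - m) * ((x + 1) / 2) ^ m)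

lemma jacobi_ode (n : ℕ) (α β : ℝ) (x : ℝ) :
    (1 - x ^ 2) * jacobiP2 n α β x + (β - α - (α + β + 2) * x) * jacobiP1 n α β x
      + (n : ℝ) * ((n : ℝ) + α + β + 1) * jacobiP n α β x = 0 := by
  have expand : (1 - x ^ 2) * jacobiP2 n α β x + (β - α - (α + β + 2) * x) * jacobiP1 n α β x
      + (n : ℝ) * ((n : ℝ) + α + β + 1) * jacobiP n α β x
      = ∑ m ∈ Finset.range (n + 1),
        ((-(jc n α β m * (((n - m : ℕ) : ℝ) * (((n - m : ℕ) : ℝ) + α))) *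
            (((x - 1) / 2) ^ (n - m - 1) * ((x + 1) / 2) ^ (m + 1)))
          + (jc n α β m * (((n - m : ℕ) : ℝ) * (((n - m : ℕ) : ℝ) + α)
              + (m : ℝ) * ((m : ℝ) + β)) *
            (((x - 1) / 2) ^ (n - m) * ((x + 1) / 2) ^ m))
          + (-(jc n α β m * ((m : ℝ) * ((m : ℝ) + β))) *
            (((x - 1) / 2) ^ (n - m + 1) * ((x + 1) / 2) ^ (m - 1)))) := by
    unfold jacobiP2 jacobiP1 jacobiP
    rw [Finset.mul_sum, Finset.mul_sum, Finset.mul_sum, ← Finset.sum_add_distrib,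
      ← Finset.sum_add_distrib]
    refine Finset.sum_congr rfl fun m hm => ?_
    have hmn : m ≤ n := Nat.lt_succ_iff.1 (Finset.mem_range.1 hm)
    have ht := term_ode α β (n - m) m x
    rw [show (((n - m : ℕ) : ℝ) + (m : ℝ)) = (n : ℝ) by
      rw [Nat.cast_sub hmn]; ring] at ht
    simp only [jc]
    linear_combination (genBinom (↑n + α) m * genBinom (↑n + β) (n - m)) * ht
  rw [expand, Finset.sum_add_distrib, Finset.sum_add_distrib]
  have hT1 : (∑ m ∈ Finset.range (n + 1),
      (-(jc n α β m * (((n - m : ℕ) : ℝ) * (((n - m : ℕ) : ℝ) + α))) *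
        (((x - 1) / 2) ^ (n - m - 1) * ((x + 1) / 2) ^ (m + 1))))
      = -∑ m ∈ Finset.range (n + 1), sG n α β x m := by
    rw [Finset.sum_range_succ, Finset.sum_range_succ' (sG n α β x) n]
    have h0 : sG n α β x 0 = 0 := by simp [sG]
    have hn : -(jc n α β n * (((n - n : ℕ) : ℝ) * (((n - n : ℕ) : ℝ) + α))) *
        (((x - 1) / 2) ^ (n - n - 1) * ((x + 1) / 2) ^ (n + 1)) = 0 := by
      simp [Nat.sub_self]
    rw [h0, hn, add_zero, add_zero, ← Finset.sum_neg_distrib]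
    refine Finset.sum_congr rfl fun m hm => ?_
    have hmn : m < n := Finset.mem_range.1 hm
    have hrec := jc_rec n α β m hmn
    unfold sG
    have e1 : n - (m + 1) = n - m - 1 := by omega
    rw [e1]
    push_cast
    linear_combination -(((x - 1) / 2) ^ (n - m - 1) * ((x + 1) / 2) ^ (m + 1)) * hrec
  have hT2 : (∑ m ∈ Finset.range (n + 1),
      (jc n α β m * (((n - m : ℕ) : ℝ) * (((n - m : ℕ) : ℝ) + α) + (m : ℝ) * ((m : ℝ) + β)) *
        (((x - 1) / 2) ^ (n - m) * ((x + 1) / 2) ^ m)))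
      = (∑ m ∈ Finset.range (n + 1), sE n α β x m)
        + ∑ m ∈ Finset.range (n + 1), sG n α β x m := by
    rw [← Finset.sum_add_distrib]
    exact Finset.sum_congr rfl fun m _ => by unfold sE sG; ring
  have hT3 : (∑ m ∈ Finset.range (n + 1),
      (-(jc n α β m * ((m : ℝ) * ((m : ℝ) + β))) *
        (((x - 1) / 2) ^ (n - m + 1) * ((x + 1) / 2) ^ (m - 1))))
      = -∑ m ∈ Finset.range (n + 1), sE n α β x m := by
    rw [Finset.sum_range_succ' _ n, Finset.sum_range_succ (sE n α β x)]
    have h0 : -(jc n α β 0 * ((0 : ℕ) * (((0 : ℕ) : ℝ) + β))) *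
        (((x - 1) / 2) ^ (n - 0 + 1) * ((x + 1) / 2) ^ (0 - 1 : ℕ)) = 0 := by
      simp
    have hn : sE n α β x n = 0 := by simp [sE, Nat.sub_self]
    rw [h0, hn, add_zero, add_zero, ← Finset.sum_neg_distrib]
    refine Finset.sum_congr rfl fun m hm => ?_
    have hmn : m < n := Finset.mem_range.1 hm
    have hrec := jc_rec n α β m hmn
    unfold sE
    have e1 : n - (m + 1) + 1 = n - m := by omega
    have e2 : m + 1 - 1 = m := by omega
    rw [e1, e2]
    push_cast
    linear_combination (((x - 1) / 2) ^ (n - m) * ((x + 1) / 2) ^ m) * hrec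
  rw [hT1, hT2, hT3]
  ring

noncomputable def gJ (n : ℕ) (α β : ℝ) : ℝ → ℝ := fun t =>
  (1 - t) ^ ((α + 1) / 2) * (1 + t) ^ ((β + 1) / 2) * jacobiP n α β t

lemma jacobiP_contDiff (n : ℕ) (α β : ℝ) : ContDiff ℝ (⊤ : ℕ∞) (jacobiP n α β) := by
  unfold jacobiP
  apply ContDiff.sum
  intro m _
  exact (contDiff_const.mul
    (((contDiff_id.sub contDiff_const).div_const 2).pow _)).mul
    (((contDiff_id.add contDiff_const).div_const 2).pow _)

lemma gJ_contDiffOn (n : ℕ) (α β : ℝ) :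
    ContDiffOn ℝ (⊤ : ℕ∞) (gJ n α β) (Set.Ioo (-1 : ℝ) 1) := by
  intro t ht
  obtain ⟨ht1, ht2⟩ := ht
  have h1 : (1 : ℝ) - t ≠ 0 := by linarith
  have h2 : (1 : ℝ) + t ≠ 0 := by linarith
  have c1 : ContDiffAt ℝ (⊤ : ℕ∞) (fun t : ℝ => (1 - t) ^ ((α + 1) / 2)) t := by
    exact (Real.contDiffAt_rpow_const_of_ne h1).comp t
      ((contDiff_const.sub contDiff_id).contDiffAt)
  have c2 : ContDiffAt ℝ (⊤ : ℕ∞) (fun t : ℝ => (1 + t) ^ ((β + 1) / 2)) t := by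
    exact (Real.contDiffAt_rpow_const_of_ne h2).comp t
      ((contDiff_const.add contDiff_id).contDiffAt)
  exact (((c1.mul c2).mul (jacobiP_contDiff n α β).contDiffAt)).contDiffWithinAt

lemma hasDerivAt_W (c d : ℝ) (t : ℝ) (h1 : 1 - t ≠ 0) (h2 : 1 + t ≠ 0) :
    HasDerivAt (fun t : ℝ => (1 - t) ^ c * (1 + t) ^ d)
      (-(c * (1 - t) ^ (c - 1)) * (1 + t) ^ d + (1 - t) ^ c * (d * (1 + t) ^ (d - 1))) t := by
  have hu : HasDerivAt (fun t : ℝ => 1 - t) (-1) t := by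
    simpa using (hasDerivAt_id t).const_sub 1
  have hv : HasDerivAt (fun t : ℝ => 1 + t) 1 t := by
    simpa using (hasDerivAt_id t).const_add 1
  have h1' := hu.rpow_const (p := c) (Or.inl h1)
  have h2' := hv.rpow_const (p := d) (Or.inl h2)
  have h := h1'.fun_mul h2'
  refine h.congr_deriv ?_
  ring

noncomputable def gJ1 (n : ℕ) (α β : ℝ) : ℝ → ℝ := fun t =>
  (-(((α + 1) / 2) * (1 - t) ^ ((α + 1) / 2 - 1)) * (1 + t) ^ ((β + 1) / 2)
    + (1 - t) ^ ((α + 1) / 2) * (((β + 1) / 2) * (1 + t) ^ ((β + 1) / 2 - 1)))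
      * jacobiP n α β t
  + (1 - t) ^ ((α + 1) / 2) * (1 + t) ^ ((β + 1) / 2) * jacobiP1 n α β t

noncomputable def gJ2 (n : ℕ) (α β : ℝ) : ℝ → ℝ := fun t =>
  (((α + 1) / 2) * ((α + 1) / 2 - 1) * (1 - t) ^ ((α + 1) / 2 - 2) * (1 + t) ^ ((β + 1) / 2)
    - 2 * ((α + 1) / 2) * ((β + 1) / 2) * (1 - t) ^ ((α + 1) / 2 - 1) * (1 + t) ^ ((β + 1) / 2 - 1)
    + ((β + 1) / 2) * ((β + 1) / 2 - 1) * (1 - t) ^ ((α + 1) / 2) * (1 + t) ^ ((β + 1) / 2 - 2))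
      * jacobiP n α β t
  + 2 * (-(((α + 1) / 2) * (1 - t) ^ ((α + 1) / 2 - 1)) * (1 + t) ^ ((β + 1) / 2)
    + (1 - t) ^ ((α + 1) / 2) * (((β + 1) / 2) * (1 + t) ^ ((β + 1) / 2 - 1)))
      * jacobiP1 n α β t
  + (1 - t) ^ ((α + 1) / 2) * (1 + t) ^ ((β + 1) / 2) * jacobiP2 n α β t

lemma gJ_hasDerivAt (n : ℕ) (α β : ℝ) (t : ℝ) (h1 : 1 - t ≠ 0) (h2 : 1 + t ≠ 0) :
    HasDerivAt (gJ n α β) (gJ1 n α β t) t := by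
  have h := (hasDerivAt_W ((α + 1) / 2) ((β + 1) / 2) t h1 h2).mul
    (jacobiP_hasDerivAt n α β t)
  exact h

lemma gJ1_hasDerivAt (n : ℕ) (α β : ℝ) (t : ℝ) (h1 : 1 - t ≠ 0) (h2 : 1 + t ≠ 0) :
    HasDerivAt (gJ1 n α β) (gJ2 n α β t) t := by
  have hu : HasDerivAt (fun t : ℝ => 1 - t) (-1) t := by
    simpa using (hasDerivAt_id t).const_sub 1
  have hv : HasDerivAt (fun t : ℝ => 1 + t) 1 t := by
    simpa using (hasDerivAt_id t).const_add 1
  have hW1 := hasDerivAt_W ((α + 1) / 2 - 1) ((β + 1) / 2) t h1 h2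
  have hW2 := hasDerivAt_W ((α + 1) / 2) ((β + 1) / 2 - 1) t h1 h2
  have hW := hasDerivAt_W ((α + 1) / 2) ((β + 1) / 2) t h1 h2
  have hA : HasDerivAt (fun t : ℝ =>
      -(((α + 1) / 2) * (1 - t) ^ ((α + 1) / 2 - 1)) * (1 + t) ^ ((β + 1) / 2)
        + (1 - t) ^ ((α + 1) / 2) * (((β + 1) / 2) * (1 + t) ^ ((β + 1) / 2 - 1))) (
      -((α + 1) / 2) * (-(((α + 1) / 2 - 1) * (1 - t) ^ ((α + 1) / 2 - 1 - 1)) *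
          (1 + t) ^ ((β + 1) / 2) + (1 - t) ^ ((α + 1) / 2 - 1) *
          (((β + 1) / 2) * (1 + t) ^ ((β + 1) / 2 - 1)))
      + ((β + 1) / 2) * (-(((α + 1) / 2) * (1 - t) ^ ((α + 1) / 2 - 1)) *
          (1 + t) ^ ((β + 1) / 2 - 1) + (1 - t) ^ ((α + 1) / 2) *
          ((((β + 1) / 2 - 1)) * (1 + t) ^ ((β + 1) / 2 - 1 - 1)))) t := by
    have t1 := hW1.const_mul (-((α + 1) / 2))
    have t2 := hW2.const_mul ((β + 1) / 2)
    convert t1.fun_add t2 using 1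
    · rfl
    · rfl
    funext y; ring
  have h := (hA.mul (jacobiP_hasDerivAt n α β t)).add
    (hW.mul (jacobiP1_hasDerivAt n α β t))
  refine h.congr_deriv ?_
  unfold gJ2
  rw [show (α + 1) / 2 - 1 - 1 = (α + 1) / 2 - 2 by ring,
    show (β + 1) / 2 - 1 - 1 = (β + 1) / 2 - 2 by ring]
  ring

lemma gJ_ode (n : ℕ) (α β : ℝ) (t : ℝ) (ht1 : -1 < t) (ht2 : t < 1) :
    4 * (1 - t ^ 2) ^ 2 * gJ2 n α β t
      + (((2 * (n : ℝ) + α + β + 1) ^ 2 - 1) * (1 - t ^ 2) - 2 * (α ^ 2 - 1) * (1 + t)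
        - 2 * (β ^ 2 - 1) * (1 - t)) * gJ n α β t = 0 := by
  have hu : (0 : ℝ) < 1 - t := by linarith
  have hv : (0 : ℝ) < 1 + t := by linarith
  have e1 : (1 - t) ^ ((α + 1) / 2) = (1 - t) ^ ((α + 1) / 2 - 2) * (1 - t) ^ 2 := by
    rw [← Real.rpow_natCast (1 - t) 2, ← Real.rpow_add hu]; ring_nf
  have e2 : (1 - t) ^ ((α + 1) / 2 - 1) = (1 - t) ^ ((α + 1) / 2 - 2) * (1 - t) := by
    rw [show (α + 1) / 2 - 1 = (α + 1) / 2 - 2 + 1 by ring, Real.rpow_add hu, Real.rpow_one]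
  have e3 : (1 + t) ^ ((β + 1) / 2) = (1 + t) ^ ((β + 1) / 2 - 2) * (1 + t) ^ 2 := by
    rw [← Real.rpow_natCast (1 + t) 2, ← Real.rpow_add hv]; ring_nf
  have e4 : (1 + t) ^ ((β + 1) / 2 - 1) = (1 + t) ^ ((β + 1) / 2 - 2) * (1 + t) := by
    rw [show (β + 1) / 2 - 1 = (β + 1) / 2 - 2 + 1 by ring, Real.rpow_add hv, Real.rpow_one]
  unfold gJ gJ2
  rw [e1, e2, e3, e4]
  linear_combination (4 * (1 - t^2) * (1 - t) ^ ((α + 1) / 2 - 2) *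
    (1 + t) ^ ((β + 1) / 2 - 2) * (1 - t)^2 * (1 + t)^2) * jacobi_ode n α β t

lemma iterDeriv_contDiffOn (g : ℝ → ℝ) (hg : ContDiffOn ℝ (⊤ : ℕ∞) g (Set.Ioo (-1 : ℝ) 1)) (k : ℕ) :
    ContDiffOn ℝ ((⊤ : ℕ∞) : WithTop ℕ∞) (iteratedDeriv k g) (Set.Ioo (-1 : ℝ) 1) := by
  induction k with
  | zero => rw [iteratedDeriv_zero]; exact hg.of_le (by simp)
  | succ k ih =>
    rw [iteratedDeriv_succ]
    exact ih.deriv_of_isOpen isOpen_Ioo (le_of_eq rfl)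

lemma iterDeriv_hasDerivAt (g : ℝ → ℝ) (hg : ContDiffOn ℝ (⊤ : ℕ∞) g (Set.Ioo (-1 : ℝ) 1)) (k : ℕ)
    (t : ℝ) (ht : t ∈ Set.Ioo (-1 : ℝ) 1) :
    HasDerivAt (iteratedDeriv k g) (iteratedDeriv (k + 1) g t) t := by
  have hd : DifferentiableOn ℝ (iteratedDeriv k g) (Set.Ioo (-1 : ℝ) 1) :=
    (iterDeriv_contDiffOn g hg k).differentiableOn (by simp)
  have h := (hd.differentiableAt (isOpen_Ioo.mem_nhds ht)).hasDerivAt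
  rwa [iteratedDeriv_succ]

lemma aZ_hasDerivAt (g : ℝ → ℝ) (hg : ContDiffOn ℝ (⊤ : ℕ∞) g (Set.Ioo (-1 : ℝ) 1))
    (aZ : ℤ → ℝ → ℝ)
    (haZ : ∀ (k : ℤ) (t : ℝ), aZ k t
      = if 0 ≤ k then iteratedDeriv k.toNat g t / (Nat.factorial k.toNat) else 0)
    (k : ℤ) (t : ℝ) (ht : t ∈ Set.Ioo (-1 : ℝ) 1) :
    HasDerivAt (aZ k) (((k : ℝ) + 1) * aZ (k + 1) t) t := by
  rcases le_or_gt 0 k with hk | hk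
  · obtain ⟨m, rfl⟩ : ∃ m : ℕ, k = (m : ℤ) := ⟨k.toNat, (Int.toNat_of_nonneg hk).symm⟩
    have hfun : aZ (m : ℤ) = fun t => iteratedDeriv m g t / (Nat.factorial m) := by
      funext s
      rw [haZ, if_pos (by positivity)]
      simp
    have hfun1 : aZ ((m : ℤ) + 1) t = iteratedDeriv (m + 1) g t / (Nat.factorial (m + 1)) := by
      rw [haZ, if_pos (by positivity)]
      norm_num [Int.toNat_natCast_add_one]
    rw [hfun]
    have h := (iterDeriv_hasDerivAt g hg m t ht).div_const (Nat.factorial m)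
    refine h.congr_deriv ?_
    rw [hfun1]
    have hm : (Nat.factorial (m + 1) : ℝ) = (m + 1) * Nat.factorial m := by
      rw [Nat.factorial_succ]; push_cast; ring
    rw [hm]
    have h1 : (Nat.factorial m : ℝ) ≠ 0 := Nat.cast_ne_zero.2 (Nat.factorial_ne_zero m)
    have h2 : ((m : ℝ) + 1) ≠ 0 := by positivity
    field_simp
    push_cast
    ring
  · have hfun : aZ k = fun _ => 0 := by
      funext s; rw [haZ, if_neg (by omega)]
    have hval : ((k : ℝ) + 1) * aZ (k + 1) t = 0 := by
      rcases eq_or_lt_of_le (by omega : k + 1 ≤ 0) with h | h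
      · have : ((k : ℝ) + 1) = 0 := by
          have : (k : ℝ) = -1 := by exact_mod_cast congrArg (Int.cast : ℤ → ℝ) (by omega : k = -1)
          rw [this]; ring
        rw [this, zero_mul]
      · rw [haZ, if_neg (by omega), mul_zero]
    rw [hfun, hval]
    exact hasDerivAt_const t 0

lemma master (g : ℝ → ℝ) (hg : ContDiffOn ℝ (⊤ : ℕ∞) g (Set.Ioo (-1 : ℝ) 1))
    (c0 c1 c2 : ℝ)
    (hode : ∀ t ∈ Set.Ioo (-1 : ℝ) 1,
      4 * (1 - t ^ 2) ^ 2 * iteratedDeriv 2 g t + (c0 + c1 * t + c2 * t ^ 2) * g t = 0)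
    (aZ : ℤ → ℝ → ℝ)
    (haZ : ∀ (k : ℤ) (t : ℝ), aZ k t
      = if 0 ≤ k then iteratedDeriv k.toNat g t / (Nat.factorial k.toNat) else 0) :
    ∀ j : ℕ, ∀ t ∈ Set.Ioo (-1 : ℝ) 1,
      ((j : ℝ) + 2) * ((j : ℝ) + 1) * (4 * (1 - t ^ 2) ^ 2) * aZ ((j : ℤ) + 2) t
      + ((j : ℝ) + 1) * (j : ℝ) * (16 * t ^ 3 - 16 * t) * aZ ((j : ℤ) + 1) t
      + ((j : ℝ) * ((j : ℝ) - 1) * (48 * t ^ 2 - 16) / 2 + (c0 + c1 * t + c2 * t ^ 2))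
          * aZ (j : ℤ) t
      + (((j : ℝ) - 1) * ((j : ℝ) - 2) * (96 * t) / 6 + (c1 + 2 * c2 * t)) * aZ ((j : ℤ) - 1) t
      + (1 / 2) * (((j : ℝ) - 2) * ((j : ℝ) - 3) * 96 / 12 + 2 * c2) * aZ ((j : ℤ) - 2) t
        = 0 := by
  intro j
  induction j with
  | zero =>
    intro t ht
    have h2 : aZ (2 : ℤ) t = iteratedDeriv 2 g t / 2 := by
      rw [haZ, if_pos (by norm_num)]
      norm_num [show ((2:ℤ).toNat) = 2 from rfl, Nat.factorial]
    have h0 : aZ (0 : ℤ) t = g t := by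
      rw [haZ, if_pos le_rfl]
      simp [iteratedDeriv_zero]
    have hm1 : aZ (-1 : ℤ) t = 0 := by rw [haZ, if_neg (by norm_num)]
    have hm2 : aZ (-2 : ℤ) t = 0 := by rw [haZ, if_neg (by norm_num)]
    push_cast
    rw [h2, h0, hm1, hm2]
    have := hode t ht
    push_cast
    linear_combination this
  | succ j IH =>
    intro t ht
    -- the function S_j is identically 0 on the open interval
    have hev : (fun s => ((j : ℝ) + 2) * ((j : ℝ) + 1) * (4 * (1 - s ^ 2) ^ 2) * aZ ((j : ℤ) + 2) s
        + ((j : ℝ) + 1) * (j : ℝ) * (16 * s ^ 3 - 16 * s) * aZ ((j : ℤ) + 1) s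
        + ((j : ℝ) * ((j : ℝ) - 1) * (48 * s ^ 2 - 16) / 2 + (c0 + c1 * s + c2 * s ^ 2))
            * aZ (j : ℤ) s
        + (((j : ℝ) - 1) * ((j : ℝ) - 2) * (96 * s) / 6 + (c1 + 2 * c2 * s)) * aZ ((j : ℤ) - 1) s
        + (1 / 2) * (((j : ℝ) - 2) * ((j : ℝ) - 3) * 96 / 12 + 2 * c2) * aZ ((j : ℤ) - 2) s)
        =ᶠ[nhds t] (fun _ => (0 : ℝ)) := by
      filter_upwards [isOpen_Ioo.mem_nhds ht] with s hs using IH s hs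
    have hzero : HasDerivAt (fun s => ((j : ℝ) + 2) * ((j : ℝ) + 1) * (4 * (1 - s ^ 2) ^ 2) * aZ ((j : ℤ) + 2) s
        + ((j : ℝ) + 1) * (j : ℝ) * (16 * s ^ 3 - 16 * s) * aZ ((j : ℤ) + 1) s
        + ((j : ℝ) * ((j : ℝ) - 1) * (48 * s ^ 2 - 16) / 2 + (c0 + c1 * s + c2 * s ^ 2))
            * aZ (j : ℤ) s
        + (((j : ℝ) - 1) * ((j : ℝ) - 2) * (96 * s) / 6 + (c1 + 2 * c2 * s)) * aZ ((j : ℤ) - 1) s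
        + (1 / 2) * (((j : ℝ) - 2) * ((j : ℝ) - 3) * 96 / 12 + 2 * c2) * aZ ((j : ℤ) - 2) s)
        (0 : ℝ) t :=
      (hasDerivAt_const t (0 : ℝ)).congr_of_eventuallyEq hev
    -- polynomial coefficient derivatives
    have hp1 : HasDerivAt (fun s : ℝ => ((j : ℝ) + 2) * ((j : ℝ) + 1) * (4 * (1 - s ^ 2) ^ 2))
        (((j : ℝ) + 2) * ((j : ℝ) + 1) * (16 * t ^ 3 - 16 * t)) t := by
      have hb : HasDerivAt (fun s : ℝ => 4 * (1 - s ^ 2) ^ 2) (16 * t ^ 3 - 16 * t) t := by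
        have h1 : HasDerivAt (fun s : ℝ => 1 - s ^ 2) (-(2 * t)) t := by
          simpa using (hasDerivAt_pow 2 t).const_sub 1
        have := (h1.pow 2).const_mul (4 : ℝ)
        refine this.congr_deriv ?_
        ring
      exact hb.const_mul _
    have hp2 : HasDerivAt (fun s : ℝ => ((j : ℝ) + 1) * (j : ℝ) * (16 * s ^ 3 - 16 * s))
        (((j : ℝ) + 1) * (j : ℝ) * (48 * t ^ 2 - 16)) t := by
      have hb : HasDerivAt (fun s : ℝ => 16 * s ^ 3 - 16 * s) (48 * t ^ 2 - 16) t := by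
        have := ((hasDerivAt_pow 3 t).const_mul (16 : ℝ)).sub
          ((hasDerivAt_id t).const_mul (16 : ℝ))
        refine this.congr_deriv ?_
        ring
      exact hb.const_mul _
    have hp3 : HasDerivAt (fun s : ℝ =>
        (j : ℝ) * ((j : ℝ) - 1) * (48 * s ^ 2 - 16) / 2 + (c0 + c1 * s + c2 * s ^ 2))
        ((j : ℝ) * ((j : ℝ) - 1) * (96 * t) / 2 + (c1 + 2 * c2 * t)) t := by
      have h1 : HasDerivAt (fun s : ℝ => (j : ℝ) * ((j : ℝ) - 1) * (48 * s ^ 2 - 16) / 2)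
          ((j : ℝ) * ((j : ℝ) - 1) * (96 * t) / 2) t := by
        have hb : HasDerivAt (fun s : ℝ => 48 * s ^ 2 - 16) (96 * t) t := by
          have := ((hasDerivAt_pow 2 t).const_mul (48 : ℝ)).sub_const 16
          refine this.congr_deriv ?_
          ring
        have := (hb.const_mul ((j : ℝ) * ((j : ℝ) - 1))).div_const 2
        exact this
      have h2 : HasDerivAt (fun s : ℝ => c0 + c1 * s + c2 * s ^ 2) (c1 + 2 * c2 * t) t := by
        have := (((hasDerivAt_id t).const_mul c1).const_add c0).add
          ((hasDerivAt_pow 2 t).const_mul c2)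
        refine this.congr_deriv ?_
        ring
      exact h1.add h2
    have hp4 : HasDerivAt (fun s : ℝ =>
        ((j : ℝ) - 1) * ((j : ℝ) - 2) * (96 * s) / 6 + (c1 + 2 * c2 * s))
        (((j : ℝ) - 1) * ((j : ℝ) - 2) * 96 / 6 + 2 * c2) t := by
      have h1 : HasDerivAt (fun s : ℝ => ((j : ℝ) - 1) * ((j : ℝ) - 2) * (96 * s) / 6)
          (((j : ℝ) - 1) * ((j : ℝ) - 2) * 96 / 6) t := by
        have := (((hasDerivAt_id t).const_mul (96 : ℝ)).const_mul
          (((j : ℝ) - 1) * ((j : ℝ) - 2))).div_const 6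
        refine this.congr_deriv ?_
        ring
      have h2 : HasDerivAt (fun s : ℝ => c1 + 2 * c2 * s) (2 * c2) t := by
        simpa using ((hasDerivAt_id t).const_mul (2 * c2)).const_add c1
      exact h1.add h2
    -- aZ derivatives
    have ha2 := aZ_hasDerivAt g hg aZ haZ ((j : ℤ) + 2) t ht
    have ha1 := aZ_hasDerivAt g hg aZ haZ ((j : ℤ) + 1) t ht
    have ha0 := aZ_hasDerivAt g hg aZ haZ (j : ℤ) t ht
    have ham1 := aZ_hasDerivAt g hg aZ haZ ((j : ℤ) - 1) t ht
    have ham2 := aZ_hasDerivAt g hg aZ haZ ((j : ℤ) - 2) t ht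
    have hD := ((((hp1.mul ha2).add (hp2.mul ha1)).add (hp3.mul ha0)).add
      (hp4.mul ham1)).add
      ((ham2.const_mul ((1 / 2) * (((j : ℝ) - 2) * ((j : ℝ) - 3) * 96 / 12 + 2 * c2))))
    have hD0 := hD.unique hzero
    have e1 : (j : ℤ) + 2 + 1 = (j : ℤ) + 3 := by ring
    have e2 : (j : ℤ) + 1 + 1 = (j : ℤ) + 2 := by ring
    have e3 : (j : ℤ) + 1 = (j : ℤ) + 1 := rfl
    have e4 : (j : ℤ) - 1 + 1 = (j : ℤ) := by ring
    have e5 : (j : ℤ) - 2 + 1 = (j : ℤ) - 1 := by ring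
    rw [e1, e2, e4, e5] at hD0
    have f1 : ((j + 1 : ℕ) : ℤ) + 2 = (j : ℤ) + 3 := by push_cast; ring
    have f2 : ((j + 1 : ℕ) : ℤ) + 1 = (j : ℤ) + 2 := by push_cast; ring
    have f3 : ((j + 1 : ℕ) : ℤ) = (j : ℤ) + 1 := by push_cast; ring
    have f4 : ((j + 1 : ℕ) : ℤ) - 1 = (j : ℤ) := by push_cast; ring
    have f5 : ((j + 1 : ℕ) : ℤ) - 2 = (j : ℤ) - 1 := by push_cast; ring
    rw [f1, f2, f4, f5, f3]
    push_cast at hD0 ⊢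
    refine (mul_eq_zero.mp ?_).resolve_left
      (show ((j : ℝ) + 1) ≠ 0 by positivity)
    linear_combination hD0

theorem stmt10 (n : ℕ) (α β : ℝ) (hα : -1 < α) (hβ : -1 < β)
    (L : ℝ) (hL : L = 2 * n + α + β + 1)
    (Y : ℝ → ℝ)
    (hY : ∀ x ∈ Set.Ioo (-1 : ℝ) 1,
      Y x = (1 - x) ^ ((α + 1) / 2) * (1 + x) ^ ((β + 1) / 2) * jacobiP n α β x)
    (Q R : ℝ → ℝ)
    (hQ : ∀ x : ℝ, Q x = 4 * (1 - x ^ 2) ^ 2)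
    (hR : ∀ x : ℝ, R x = (L ^ 2 - 1) * (1 - x ^ 2) - 2 * (α ^ 2 - 1) * (1 + x)
      - 2 * (β ^ 2 - 1) * (1 - x))
    (x : ℝ) (hx : x ∈ Set.Ioo (-1 : ℝ) 1)
    (A : ℤ → ℝ)
    (hA : ∀ k : ℤ, A k = if 0 ≤ k then iteratedDeriv k.toNat Y x / (Nat.factorial k.toNat) else 0) :
    ContDiffOn ℝ (⊤ : ℕ∞) Y (Set.Ioo (-1 : ℝ) 1) ∧
    ∀ j : ℕ,
      ((j : ℝ) + 2) * ((j : ℝ) + 1) * Q x * A ((j : ℤ) + 2)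
      + ((j : ℝ) + 1) * (j : ℝ) * deriv Q x * A ((j : ℤ) + 1)
      + ((j : ℝ) * ((j : ℝ) - 1) * iteratedDeriv 2 Q x / 2 + R x) * A (j : ℤ)
      + (((j : ℝ) - 1) * ((j : ℝ) - 2) * iteratedDeriv 3 Q x / 6 + deriv R x) * A ((j : ℤ) - 1)
      + (1 / 2) * (((j : ℝ) - 2) * ((j : ℝ) - 3) * iteratedDeriv 4 Q x / 12
          + iteratedDeriv 2 R x) * A ((j : ℤ) - 2) = 0 := by
  subst hL
  constructor
  · exact (gJ_contDiffOn n α β).congr (fun t ht => hY t ht)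
  intro j
  -- derivatives of gJ on the interval
  have hd1 : ∀ t ∈ Set.Ioo (-1 : ℝ) 1, deriv (gJ n α β) t = gJ1 n α β t := by
    intro t ht
    exact (gJ_hasDerivAt n α β t (by have := ht.2; intro h; linarith [ht.2] : 1 - t ≠ 0)
      (by have := ht.1; intro h; linarith [ht.1] : 1 + t ≠ 0)).deriv
  have hd2 : ∀ t ∈ Set.Ioo (-1 : ℝ) 1, iteratedDeriv 2 (gJ n α β) t = gJ2 n α β t := by
    intro t ht
    have h1t : (1 : ℝ) - t ≠ 0 := by intro h; linarith [ht.2]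
    have h2t : (1 : ℝ) + t ≠ 0 := by intro h; linarith [ht.1]
    rw [show (2 : ℕ) = 1 + 1 from rfl, iteratedDeriv_succ, iteratedDeriv_one]
    have hev : deriv (gJ n α β) =ᶠ[nhds t] gJ1 n α β := by
      filter_upwards [isOpen_Ioo.mem_nhds ht] with s hs using hd1 s hs
    rw [hev.deriv_eq]
    exact (gJ1_hasDerivAt n α β t h1t h2t).deriv
  -- the ODE in the master form
  set c0 : ℝ := (2 * (n : ℝ) + α + β + 1) ^ 2 - 1 - 2 * (α ^ 2 - 1) - 2 * (β ^ 2 - 1) with hc0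
  set c1 : ℝ := -2 * (α ^ 2 - 1) + 2 * (β ^ 2 - 1) with hc1
  set c2 : ℝ := -((2 * (n : ℝ) + α + β + 1) ^ 2 - 1) with hc2
  have hode : ∀ t ∈ Set.Ioo (-1 : ℝ) 1,
      4 * (1 - t ^ 2) ^ 2 * iteratedDeriv 2 (gJ n α β) t
        + (c0 + c1 * t + c2 * t ^ 2) * gJ n α β t = 0 := by
    intro t ht
    rw [hd2 t ht]
    have := gJ_ode n α β t ht.1 ht.2
    rw [hc0, hc1, hc2]
    linear_combination this
  have hM := master (gJ n α β) (gJ_contDiffOn n α β) c0 c1 c2 hode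
    (fun k t => if 0 ≤ k then iteratedDeriv k.toNat (gJ n α β) t / (Nat.factorial k.toNat) else 0)
    (fun _ _ => rfl) j x hx
  -- A agrees with the Taylor coefficients of gJ
  have hYev : Y =ᶠ[nhds x] gJ n α β := by
    filter_upwards [isOpen_Ioo.mem_nhds hx] with s hs using hY s hs
  have hAZ : ∀ k : ℤ, A k
      = if 0 ≤ k then iteratedDeriv k.toNat (gJ n α β) x / (Nat.factorial k.toNat) else 0 := by
    intro k
    rw [hA]
    by_cases h : 0 ≤ k
    · rw [if_pos h, if_pos h, hYev.iteratedDeriv_eq]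
    · rw [if_neg h, if_neg h]
  -- derivatives of Q and R
  have hQf : Q = fun t => 4 * (1 - t ^ 2) ^ 2 := funext hQ
  have hQ1 : deriv Q = fun t => 16 * t ^ 3 - 16 * t := by
    funext t
    rw [hQf]
    have h1 : HasDerivAt (fun s : ℝ => 1 - s ^ 2) (-(2 * t)) t := by
      simpa using (hasDerivAt_pow 2 t).const_sub 1
    have h := (h1.pow 2).const_mul (4 : ℝ)
    have h' : HasDerivAt (fun s : ℝ => 4 * (1 - s ^ 2) ^ 2) (16 * t ^ 3 - 16 * t) t := by
      refine h.congr_deriv ?_; ring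
    exact h'.deriv
  have hQ2 : iteratedDeriv 2 Q = fun t => 48 * t ^ 2 - 16 := by
    rw [show (2 : ℕ) = 1 + 1 from rfl, iteratedDeriv_succ, iteratedDeriv_one, hQ1]
    funext t
    have h : HasDerivAt (fun s : ℝ => 16 * s ^ 3 - 16 * s) (48 * t ^ 2 - 16) t := by
      have := ((hasDerivAt_pow 3 t).const_mul (16 : ℝ)).sub
        ((hasDerivAt_id t).const_mul (16 : ℝ))
      refine this.congr_deriv ?_; ring
    exact h.deriv
  have hQ3 : iteratedDeriv 3 Q = fun t => 96 * t := by
    rw [show (3 : ℕ) = 2 + 1 from rfl, iteratedDeriv_succ, hQ2]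
    funext t
    have h : HasDerivAt (fun s : ℝ => 48 * s ^ 2 - 16) (96 * t) t := by
      have := ((hasDerivAt_pow 2 t).const_mul (48 : ℝ)).sub_const 16
      refine this.congr_deriv ?_; ring
    exact h.deriv
  have hQ4 : iteratedDeriv 4 Q = fun _ => 96 := by
    rw [show (4 : ℕ) = 3 + 1 from rfl, iteratedDeriv_succ, hQ3]
    funext t
    have h : HasDerivAt (fun s : ℝ => 96 * s) (96 : ℝ) t := by
      simpa using (hasDerivAt_id t).const_mul (96 : ℝ)
    exact h.deriv
  have hRf : R = fun t => ((2 * (n : ℝ) + α + β + 1) ^ 2 - 1) * (1 - t ^ 2)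
      - 2 * (α ^ 2 - 1) * (1 + t) - 2 * (β ^ 2 - 1) * (1 - t) := funext hR
  have hR1 : deriv R = fun t => c1 + 2 * c2 * t := by
    funext t
    rw [hRf]
    have h1 : HasDerivAt (fun s : ℝ => 1 - s ^ 2) (-(2 * t)) t := by
      simpa using (hasDerivAt_pow 2 t).const_sub 1
    have h2 : HasDerivAt (fun s : ℝ => 1 + s) (1 : ℝ) t := by
      simpa using (hasDerivAt_id t).const_add 1
    have h3 : HasDerivAt (fun s : ℝ => 1 - s) (-1 : ℝ) t := by
      simpa using (hasDerivAt_id t).const_sub 1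
    have h := ((h1.const_mul ((2 * (n : ℝ) + α + β + 1) ^ 2 - 1)).sub
      (h2.const_mul (2 * (α ^ 2 - 1)))).sub (h3.const_mul (2 * (β ^ 2 - 1)))
    have h' : HasDerivAt (fun s : ℝ => ((2 * (n : ℝ) + α + β + 1) ^ 2 - 1) * (1 - s ^ 2)
        - 2 * (α ^ 2 - 1) * (1 + s) - 2 * (β ^ 2 - 1) * (1 - s)) (c1 + 2 * c2 * t) t := by
      refine h.congr_deriv ?_
      rw [hc1, hc2]; ring
    exact h'.deriv
  have hR2 : iteratedDeriv 2 R = fun _ => 2 * c2 := by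
    rw [show (2 : ℕ) = 1 + 1 from rfl, iteratedDeriv_succ, iteratedDeriv_one, hR1]
    funext t
    have h : HasDerivAt (fun s : ℝ => c1 + 2 * c2 * s) (2 * c2) t := by
      simpa using ((hasDerivAt_id t).const_mul (2 * c2)).const_add c1
    exact h.deriv
  simp only [hAZ, hQ x, hQ1, hQ2, hQ3, hQ4, hR x, hR1, hR2]
  rw [hc0, hc1, hc2] at hM
  linear_combination hM
end

section
/- Let n ≥ 1 be a natural number and α, β > −1 be real, let L = 2n+α+β+1, and let Ỹ(x) = (1−x)^((α+1)/2)·(1+x)^((β+1)/2)·P_n^{(α,β)}(x) on (−1,1). Then for every x ∈ (−1,1) with P_n^{(α,β)}(x) ≠ 0: Ỹ'(x)/Ỹ(x) = (n+β+1)/(2(1+x)) − (n+α+1)/(2(1−x)) + [ n(α−β) + 2(n+α)(n+β)·P_{n−1}^{(α,β)}(x)/P_n^{(α,β)}(x) ] / ((L−1)(1−x²)). -/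
/-!
With `u = (x - 1) / 2` and `v = (x + 1) / 2`, `P_n^{(α,β)}` is the binary form
`Σ_{i+j=n} C(n+α, j) C(n+β, i) u^i v^j` on the line `v - u = 1`, and
`(1 - x²) d/dx = -4uv d/dx = -2 (v · u∂_u + u · v∂_v)`.
Euler's relation `u∂_u + v∂_v = n` and the coefficientwise identity
`(2n+α+β) v∂_v P_n = n(n+α) P_n + (n+α)(n+β)(v - u) P_{n-1}`,
which comes from the absorption identities `(k+1) C(t+1, k+1) = (t+1) C(t, k) = (t+1-k) C(t+1, k)`,
give the classical relation
`(2n+α+β)(1-x²) P_n' = n(α-β-(2n+α+β)x) P_n + 2(n+α)(n+β) P_{n-1}`.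
The theorem is this relation inserted into the logarithmic derivative of `(1-x)^a (1+x)^b P_n`.
-/

open Real Filter Set

open Finset Topology

lemma prod_range_succ_add_one_sub (t : ℝ) (k : ℕ) :
    ∏ i ∈ range (k + 1), (t + 1 - i) = (t + 1) * ∏ i ∈ range k, (t - i) := by
  rw [prod_range_succ', mul_comm]
  push_cast
  simp only [add_sub_add_right_eq_sub, sub_zero]

lemma genBinom_succ_mul_succ (t : ℝ) (k : ℕ) :
    genBinom (t + 1) (k + 1) * (k + 1) = (t + 1) * genBinom t k := by
  simp only [genBinom, prod_range_succ_add_one_sub, Nat.factorial_succ]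
  push_cast
  field_simp

lemma genBinom_add_one_mul_sub (t : ℝ) (k : ℕ) :
    genBinom (t + 1) k * (t + 1 - k) = (t + 1) * genBinom t k := by
  have h := prod_range_succ_add_one_sub t k
  rw [prod_range_succ] at h
  simp only [genBinom]
  rw [div_mul_eq_mul_div, h, mul_div_assoc]

-- The exponent of `v` comes first so that `p.1` is the summation index `m` of `jacobiP`.
def binaryForm (n : ℕ) (c : ℕ × ℕ → ℝ) (u v : ℝ) : ℝ :=
  ∑ p ∈ antidiagonal n, c p * u ^ p.2 * v ^ p.1

lemma binaryForm_snd_add_fst (n : ℕ) (c : ℕ × ℕ → ℝ) (u v : ℝ) :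
    binaryForm n (fun p => p.2 * c p) u v + binaryForm n (fun p => p.1 * c p) u v
      = n * binaryForm n c u v := by
  rw [binaryForm, binaryForm, binaryForm, ← sum_add_distrib, mul_sum]
  refine sum_congr rfl fun p hp => ?_
  have hp' : (p.1 : ℝ) + p.2 = n := by exact_mod_cast mem_antidiagonal.mp hp
  linear_combination c p * u ^ p.2 * v ^ p.1 * hp'

lemma natCast_mul_pow_sub_one_mul (k : ℕ) (w : ℝ) :
    (k : ℝ) * w ^ (k - 1) * w = k * w ^ k := by
  cases k <;> simp [pow_succ, mul_assoc]

lemma one_sub_sq_mul_deriv_binaryForm (n : ℕ) (c : ℕ × ℕ → ℝ) (x : ℝ) :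
    (1 - x ^ 2) * deriv (fun y => binaryForm n c ((y - 1) / 2) ((y + 1) / 2)) x
      = -2 * ((x + 1) / 2 * binaryForm n (fun p => p.2 * c p) ((x - 1) / 2) ((x + 1) / 2)
          + (x - 1) / 2 * binaryForm n (fun p => p.1 * c p) ((x - 1) / 2) ((x + 1) / 2)) := by
  have hd := HasDerivAt.fun_sum (u := antidiagonal n) fun p _ =>
    ((((hasDerivAt_id' x).sub_const 1).div_const 2).fun_pow p.2).const_mul (c p) |>.fun_mul
      ((((hasDerivAt_id' x).add_const 1).div_const 2).fun_pow p.1)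
  simp only [binaryForm]
  rw [hd.deriv, mul_sum, mul_sum, mul_sum, ← sum_add_distrib, mul_sum]
  refine sum_congr rfl fun p _ => ?_
  linear_combination
    -2 * c p * ((x + 1) / 2) ^ p.1 * ((x + 1) / 2)
        * natCast_mul_pow_sub_one_mul p.2 ((x - 1) / 2)
      - 2 * c p * ((x - 1) / 2) ^ p.2 * ((x - 1) / 2)
        * natCast_mul_pow_sub_one_mul p.1 ((x + 1) / 2)

noncomputable def jacobiCoeff (n : ℕ) (α β : ℝ) (p : ℕ × ℕ) : ℝ :=
  genBinom (n + α) p.1 * genBinom (n + β) p.2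

lemma jacobiP_eq_binaryForm (n : ℕ) (α β x : ℝ) :
    jacobiP n α β x = binaryForm n (jacobiCoeff n α β) ((x - 1) / 2) ((x + 1) / 2) :=
  (Nat.sum_antidiagonal_eq_sum_range_succ_mk
    (fun p => jacobiCoeff n α β p * ((x - 1) / 2) ^ p.2 * ((x + 1) / 2) ^ p.1) n).symm

lemma jacobiCoeff_swap (n : ℕ) (α β : ℝ) (p : ℕ × ℕ) :
    jacobiCoeff n α β p.swap = jacobiCoeff n β α p :=
  mul_comm _ _

lemma jacobiCoeff_succ_fst {N : ℕ} (α β : ℝ) {p : ℕ × ℕ} (hp : p.1 + p.2 = N) :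
    (p.1 + 1) * (p.1 + 1 + β) * jacobiCoeff (N + 1) α β (p.1 + 1, p.2)
      = (N + 1 + α) * (N + 1 + β) * jacobiCoeff N α β p := by
  have hα := genBinom_succ_mul_succ (N + α) p.1
  have hβ := genBinom_add_one_mul_sub (N + β) p.2
  have hN : (N : ℝ) = p.1 + p.2 := by exact_mod_cast hp.symm
  simp only [jacobiCoeff]
  rw [show ((N + 1 : ℕ) : ℝ) + α = N + α + 1 by push_cast; ring,
    show ((N + 1 : ℕ) : ℝ) + β = N + β + 1 by push_cast; ring]
  linear_combination (p.1 + 1 + β) * genBinom (N + β + 1) p.2 * hα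
    + (N + α + 1) * genBinom (N + α) p.1 * hβ
    - (N + α + 1) * genBinom (N + α) p.1 * genBinom (N + β + 1) p.2 * hN

lemma jacobiCoeff_succ_snd {N : ℕ} (α β : ℝ) {p : ℕ × ℕ} (hp : p.1 + p.2 = N) :
    (p.2 + 1) * (p.2 + 1 + α) * jacobiCoeff (N + 1) α β (p.1, p.2 + 1)
      = (N + 1 + α) * (N + 1 + β) * jacobiCoeff N α β p := by
  have h := jacobiCoeff_succ_fst (N := N) β α (p := p.swap) (by simp [← hp, add_comm])
  rw [← jacobiCoeff_swap (N + 1) β α, ← jacobiCoeff_swap N β α]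
  simp only [Prod.swap_prod_mk, Prod.fst_swap, Prod.snd_swap] at h ⊢
  linear_combination h

lemma mul_binaryForm_jacobiCoeff_eq_fst (N : ℕ) (α β u v : ℝ) :
    (N + 1 + α) * (N + 1 + β) * v * binaryForm N (jacobiCoeff N α β) u v
      = binaryForm (N + 1) (fun p => p.1 * (p.1 + β) * jacobiCoeff (N + 1) α β p) u v := by
  rw [binaryForm, binaryForm, Nat.sum_antidiagonal_succ, mul_sum]
  simp only [CharP.cast_eq_zero, zero_mul, zero_add]
  refine sum_congr rfl fun p hp => ?_
  push_cast
  linear_combination -u ^ p.2 * v ^ (p.1 + 1) * jacobiCoeff_succ_fst α β (mem_antidiagonal.mp hp)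

lemma mul_binaryForm_jacobiCoeff_eq_snd (N : ℕ) (α β u v : ℝ) :
    (N + 1 + α) * (N + 1 + β) * u * binaryForm N (jacobiCoeff N α β) u v
      = binaryForm (N + 1) (fun p => p.2 * (p.2 + α) * jacobiCoeff (N + 1) α β p) u v := by
  rw [binaryForm, binaryForm, Nat.sum_antidiagonal_succ', mul_sum]
  simp only [CharP.cast_eq_zero, zero_mul, zero_add]
  refine sum_congr rfl fun p hp => ?_
  push_cast
  linear_combination -u ^ (p.2 + 1) * v ^ p.1 * jacobiCoeff_succ_snd α β (mem_antidiagonal.mp hp)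

lemma binaryForm_jacobiCoeff_contiguous (N : ℕ) (α β u v : ℝ) :
    (2 * (N + 1) + α + β) * binaryForm (N + 1) (fun p => p.1 * jacobiCoeff (N + 1) α β p) u v
      = (N + 1) * (N + 1 + α) * binaryForm (N + 1) (jacobiCoeff (N + 1) α β) u v
        + (N + 1 + α) * (N + 1 + β) * (v - u) * binaryForm N (jacobiCoeff N α β) u v := by
  rw [mul_sub, sub_mul, mul_binaryForm_jacobiCoeff_eq_fst, mul_binaryForm_jacobiCoeff_eq_snd]
  simp only [binaryForm]
  rw [mul_sum, mul_sum, ← sum_sub_distrib, ← sum_add_distrib]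
  refine sum_congr rfl fun p hp => ?_
  have hp' : (p.1 : ℝ) + p.2 = N + 1 := by exact_mod_cast mem_antidiagonal.mp hp
  linear_combination
    (N + 1 + p.2 - p.1 + α) * jacobiCoeff (N + 1) α β p * u ^ p.2 * v ^ p.1 * hp'

theorem one_sub_sq_mul_deriv_jacobiP (N : ℕ) (α β x : ℝ) :
    (2 * (N + 1) + α + β) * (1 - x ^ 2) * deriv (jacobiP (N + 1) α β) x
      = (N + 1) * (α - β - (2 * (N + 1) + α + β) * x) * jacobiP (N + 1) α β x
        + 2 * (N + 1 + α) * (N + 1 + β) * jacobiP N α β x := by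
  rw [funext (jacobiP_eq_binaryForm (N + 1) α β), jacobiP_eq_binaryForm N α β]
  have hderiv := one_sub_sq_mul_deriv_binaryForm (N + 1) (jacobiCoeff (N + 1) α β) x
  have heuler :=
    binaryForm_snd_add_fst (N + 1) (jacobiCoeff (N + 1) α β) ((x - 1) / 2) ((x + 1) / 2)
  have hcontig := binaryForm_jacobiCoeff_contiguous N α β ((x - 1) / 2) ((x + 1) / 2)
  push_cast at heuler
  linear_combination (2 * (N + 1) + α + β) * hderiv
    - (2 * (N + 1) + α + β) * (x + 1) * heuler + 2 * hcontig

lemma differentiable_jacobiP (n : ℕ) (α β : ℝ) : Differentiable ℝ (jacobiP n α β) := by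
  rw [funext (jacobiP_eq_binaryForm n α β)]
  unfold binaryForm
  fun_prop

lemma logDeriv_rpow_const_of_hasDerivAt {f : ℝ → ℝ} {f' x : ℝ} (a : ℝ)
    (hf : HasDerivAt f f' x) (hx : 0 < f x) : logDeriv (fun y => f y ^ a) x = a * f' / f x := by
  rw [logDeriv_apply, (hf.rpow_const (Or.inl hx.ne')).deriv, rpow_sub_one hx.ne']
  field_simp

lemma logDeriv_one_sub_rpow_mul_one_add_rpow_mul (a b : ℝ) {f : ℝ → ℝ} {x : ℝ}
    (hx : x ∈ Ioo (-1 : ℝ) 1) (hf : DifferentiableAt ℝ f x) (hfx : f x ≠ 0) :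
    logDeriv (fun y => (1 - y) ^ a * (1 + y) ^ b * f y) x
      = -a / (1 - x) + b / (1 + x) + logDeriv f x := by
  have h₁ : 0 < 1 - x := by linarith [hx.2]
  have h₂ : 0 < 1 + x := by linarith [hx.1]
  have hd₁ := (hasDerivAt_id' x).const_sub 1
  have hd₂ := (hasDerivAt_id' x).const_add 1
  have hdiff₁ := (hd₁.rpow_const (p := a) (Or.inl h₁.ne')).differentiableAt
  have hdiff₂ := (hd₂.rpow_const (p := b) (Or.inl h₂.ne')).differentiableAt
  have hpow₁ := rpow_pos_of_pos h₁ a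
  have hpow₂ := rpow_pos_of_pos h₂ b
  rw [logDeriv_mul x (mul_pos hpow₁ hpow₂).ne' hfx (hdiff₁.fun_mul hdiff₂) hf,
    logDeriv_mul x hpow₁.ne' hpow₂.ne' hdiff₁ hdiff₂,
    logDeriv_rpow_const_of_hasDerivAt a hd₁ h₁, logDeriv_rpow_const_of_hasDerivAt b hd₂ h₂]
  ring

theorem stmt13 (n : ℕ) (hn : 1 ≤ n) (α β : ℝ) (hα : -1 < α) (hβ : -1 < β)
    (L : ℝ) (hL : L = 2 * n + α + β + 1)
    (Y : ℝ → ℝ)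
    (hY : ∀ x ∈ Set.Ioo (-1 : ℝ) 1,
      Y x = (1 - x) ^ ((α + 1) / 2) * (1 + x) ^ ((β + 1) / 2) * jacobiP n α β x)
    (x : ℝ) (hx : x ∈ Set.Ioo (-1 : ℝ) 1) (hP : jacobiP n α β x ≠ 0) :
    deriv Y x / Y x = ((n : ℝ) + β + 1) / (2 * (1 + x)) - ((n : ℝ) + α + 1) / (2 * (1 - x))
      + ((n : ℝ) * (α - β) + 2 * ((n : ℝ) + α) * ((n : ℝ) + β) *
          (jacobiP (n - 1) α β x / jacobiP n α β x)) / ((L - 1) * (1 - x ^ 2)) := by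
  obtain ⟨N, rfl⟩ : ∃ N, n = N + 1 := ⟨n - 1, by omega⟩
  have h₁ : 0 < 1 - x := by linarith [hx.2]
  have h₂ : 0 < 1 + x := by linarith [hx.1]
  have hsq : 1 - x ^ 2 ≠ 0 := by nlinarith
  have hL' : L - 1 = 2 * (N + 1) + α + β := by rw [hL]; push_cast; ring
  have hD : 0 < 2 * ((N : ℝ) + 1) + α + β := by linarith [(N.cast_nonneg : (0 : ℝ) ≤ N)]
  have hYg : Y =ᶠ[𝓝 x] fun y =>
      (1 - y) ^ ((α + 1) / 2) * (1 + y) ^ ((β + 1) / 2) * jacobiP (N + 1) α β y :=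
    eventually_of_mem (Ioo_mem_nhds hx.1 hx.2) hY
  calc deriv Y x / Y x = logDeriv (fun y =>
        (1 - y) ^ ((α + 1) / 2) * (1 + y) ^ ((β + 1) / 2) * jacobiP (N + 1) α β y) x :=
        (logDeriv_congr_nhds hYg).eq_of_nhds
    _ = -((α + 1) / 2) / (1 - x) + (β + 1) / 2 / (1 + x)
          + deriv (jacobiP (N + 1) α β) x / jacobiP (N + 1) α β x :=
        logDeriv_one_sub_rpow_mul_one_add_rpow_mul _ _ hx (differentiable_jacobiP _ α β x) hP
    _ = _ := by
        rw [hL', Nat.add_sub_cancel]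
        push_cast
        field_simp
        linear_combination 2 * (1 - x) * (1 + x) * one_sub_sq_mul_deriv_jacobiP N α β x
end
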